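/- If f is a nonzero minimal integer flow on a sequence graph, then there exists a tight even-length cycle traversal of length L = ‖f‖₁ whose alternating flow equals f. -/

import Mathlib

open scoped Classical
open Finset

noncomputable section

/-- A sequence graph: finite multigraph whose edges are split into segment
edges (`seg`) and bond edges, each segment edge having two distinct endpoints. -/
structure SeqGraph (V E : Type) where
  ends : E → Sym2 V
  seg : E → Prop
  seg_not_diag : ∀ x : E, seg x → ¬ (ends x).IsDiag

namespace SeqGraph

variable {V E : Type} [Fintype V] [Fintype E]

/-- Incidence multiplicity of vertex `u` on edge `x`. -/
def mult (G : SeqGraph V E) (u : V) (x : E) : ℤ :=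
  if G.ends x = s(u, u) then 2 else if u ∈ G.ends x then 1 else 0

/-- The balance condition: at each vertex the total weight of segment-edge
incidences equals the total weight of bond-edge incidences. -/
def IsFlow (G : SeqGraph V E) (f : E → ℤ) : Prop :=
  ∀ u : V,
    (∑ x : E, if G.seg x then G.mult u x * f x else 0) =
      ∑ x : E, if G.seg x then 0 else G.mult u x * f x

/-- ℓ¹ norm of an integer weighting. -/
def l1 (f : E → ℤ) : ℤ := ∑ x : E, |f x|

/-- A (nonzero) integer flow is minimal if it admits no nontrivial ℓ¹-additive
decomposition into nonzero integer flows. -/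
def MinimalFlow (G : SeqGraph V E) (f : E → ℤ) : Prop :=
  ¬ ∃ f₁ f₂ : E → ℤ, G.IsFlow f₁ ∧ G.IsFlow f₂ ∧ f₁ ≠ 0 ∧ f₂ ≠ 0 ∧
      f = f₁ + f₂ ∧ l1 f = l1 f₁ + l1 f₂

/-- A cycle traversal of length `L ≥ 1`. -/
structure CycleTraversal (G : SeqGraph V E) where
  L : ℕ
  pos : L ≠ 0
  e : ZMod L → E
  v : ZMod L → V
  compat : ∀ i : ZMod L, G.ends (e i) = s(v (i - 1), v i)

variable {G : SeqGraph V E}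

/-- Number of indices at which the traversal uses edge `x`. -/
def CycleTraversal.threadCount (t : G.CycleTraversal) (x : E) : ℕ :=
  haveI : NeZero t.L := ⟨t.pos⟩
  (Finset.univ.filter fun i : ZMod t.L => t.e i = x).card

/-- The thread flow of a traversal. -/
def CycleTraversal.threadFlow (t : G.CycleTraversal) : E → ℤ :=
  fun x => (t.threadCount x : ℤ)

/-- A sequence traversal: even length, alternating between segment edges
(at even indices) and bond edges (at odd indices). -/
def CycleTraversal.IsSeqTraversal (t : G.CycleTraversal) : Prop :=
  Even t.L ∧ ∀ i : ZMod t.L, G.seg (t.e i) ↔ Even i.val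

/-- Alternating weighting `∑ i, (-1)^i δ_{e i}` of an (even-length) traversal. -/
def CycleTraversal.altWeight (t : G.CycleTraversal) : E → ℤ :=
  haveI : NeZero t.L := ⟨t.pos⟩
  fun x => ∑ i : ZMod t.L, if t.e i = x then (-1 : ℤ) ^ i.val else 0

/-- Conjugate weighting: keep the value on segment edges, negate on bonds. -/
def conj (G : SeqGraph V E) (g : E → ℤ) : E → ℤ :=
  fun x => if G.seg x then g x else -g x

/-- Alternating flow: the conjugate of the alternating weighting. -/
def CycleTraversal.altFlow (t : G.CycleTraversal) : E → ℤ :=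
  G.conj t.altWeight

/-- Tight: equal edges only appear at indices of equal parity. -/
def CycleTraversal.Tight (t : G.CycleTraversal) : Prop :=
  ∀ i j : ZMod t.L, t.e i = t.e j → i.val % 2 = j.val % 2

/-- Synchronized: coinciding (distinct, same end vertex) indices differ by an
odd integer. -/
def CycleTraversal.Synchronized (t : G.CycleTraversal) : Prop :=
  ∀ i j : ZMod t.L, i ≠ j → t.v i = t.v j → Odd ((i.val : ℤ) - (j.val : ℤ))

/-- Nested: no interleaved pairs of coinciding indices. -/
def CycleTraversal.Nested (t : G.CycleTraversal) : Prop :=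
  ¬ ∃ i₁ i₂ j₁ j₂ : ZMod t.L,
      i₁.val < i₂.val ∧ i₂.val < j₁.val ∧ j₁.val < j₂.val ∧
      t.v i₁ = t.v j₁ ∧ t.v i₂ = t.v j₂

/-- Connectivity: any two vertices are joined by a finite walk along edges. -/
def Connected (G : SeqGraph V E) : Prop :=
  ∀ a b : V, ∃ (n : ℕ) (p : Fin (n + 1) → V), p 0 = a ∧ p (Fin.last n) = b ∧
    ∀ i : Fin n, ∃ x : E, G.ends x = s(p i.castSucc, p i.succ)

end SeqGraph

/-!
Let `g` be the conjugate of `f`; the balance condition says that `g` has vanishing incidence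
sum at every vertex. Starting from an edge with `g > 0`, extend a walk greedily, taking as
`i`-th edge one on which `(-1) ^ i * g` is positive and which has been used fewer than `|g|`
times. The vanishing incidence sums provide such an edge at the current end unless the walk
has closed up with even length, and the capacity bound forces this within `‖g‖₁` steps. The
alternating weight `w` of the closed walk is again balanced and satisfies
`|w| + |g - w| = |g|`, so minimality of `f` forces `w = g`. The length of the walk is then
`∑ |w| = ‖f‖₁`, and the sign condition makes it tight.
-/

lemma Int.neg_one_pow_eq_sign_of_mul_pos {i : ℕ} {c : ℤ} (h : 0 < (-1) ^ i * c) :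
    (-1) ^ i = c.sign := by
  rcases neg_one_pow_eq_or ℤ i with hi | hi <;> rw [hi] at h ⊢
  · exact (Int.sign_eq_one_of_pos (by linarith)).symm
  · exact (Int.sign_eq_neg_one_of_neg (by linarith)).symm

lemma Int.mod_two_eq_of_neg_one_pow_eq {i j : ℕ} (h : (-1 : ℤ) ^ i = (-1) ^ j) :
    i % 2 = j % 2 := by
  rw [neg_one_pow_eq_pow_mod_two, neg_one_pow_eq_pow_mod_two (n := j)] at h
  rcases Nat.mod_two_eq_zero_or_one i with hi | hi <;>
    rcases Nat.mod_two_eq_zero_or_one j with hj | hj <;> simp_all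

lemma Int.abs_sign_mul_of_le {a m : ℤ} (h₀ : 0 ≤ m) (h : m ≤ |a|) : |a.sign * m| = m := by
  rcases eq_or_ne a 0 with rfl | ha
  · simp at h ⊢
    omega
  · rw [abs_mul, Int.abs_sign_of_ne_zero ha, one_mul, abs_of_nonneg h₀]

lemma ZMod.sum_comp_val {M : Type*} [AddCommMonoid M] {n : ℕ} [NeZero n] (F : ℕ → M) :
    ∑ i : ZMod n, F i.val = ∑ i ∈ range n, F i :=
  Finset.sum_nbij' ZMod.val Nat.cast (by simp [ZMod.val_lt]) (by simp)
    (by simp) (fun i hi => ZMod.val_cast_of_lt (Finset.mem_range.1 hi)) (by simp)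

lemma ZMod.val_add_one_eq_mod {n : ℕ} [NeZero n] (i : ZMod n) :
    (i + 1).val = (i.val + 1) % n := by
  rw [← ZMod.val_natCast, Nat.cast_add, ZMod.natCast_zmod_val, Nat.cast_one]

namespace SeqGraph

variable {V E : Type} {G : SeqGraph V E}

lemma mult_of_ends_eq {x : E} {p q : V} (h : G.ends x = s(p, q)) (u : V) :
    G.mult u x = (if u = p then 1 else 0) + (if u = q then 1 else 0) := by
  unfold mult
  rw [h]
  by_cases hp : u = p <;> by_cases hq : u = q <;> simp [hp, hq] <;> grind

lemma mult_pos_iff {u : V} {x : E} : 0 < G.mult u x ↔ u ∈ G.ends x := by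
  unfold mult
  split_ifs <;> simp_all

lemma mult_nonneg (u : V) (x : E) : 0 ≤ G.mult u x := by
  unfold mult
  split_ifs <;> norm_num

@[simp]
lemma conj_conj (g : E → ℤ) : G.conj (G.conj g) = g := by
  funext x
  unfold conj
  split_ifs <;> simp

@[simp]
lemma conj_zero : G.conj 0 = 0 := by
  funext x
  simp [conj]

@[simp]
lemma conj_eq_zero_iff {g : E → ℤ} : G.conj g = 0 ↔ g = 0 :=
  ⟨fun h => by simpa using congrArg G.conj h, fun h => by rw [h, conj_zero]⟩

lemma conj_sub (g h : E → ℤ) : G.conj (g - h) = G.conj g - G.conj h := by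
  funext x
  simp only [conj, Pi.sub_apply]
  split_ifs <;> ring

@[simp]
lemma abs_conj (g : E → ℤ) (x : E) : |G.conj g x| = |g x| := by
  unfold conj
  split_ifs <;> simp

section Balanced

variable [Fintype E]

@[simp]
lemma l1_conj (g : E → ℤ) : l1 (G.conj g) = l1 g := by
  simp [l1]

def IsBalanced (G : SeqGraph V E) (g : E → ℤ) : Prop :=
  ∀ u : V, ∑ x : E, G.mult u x * g x = 0

lemma IsBalanced.sub {g h : E → ℤ} (hg : G.IsBalanced g) (hh : G.IsBalanced h) :
    G.IsBalanced (g - h) := by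
  intro u
  simp only [Pi.sub_apply, mul_sub, Finset.sum_sub_distrib, hg u, hh u, sub_zero]

lemma isFlow_iff_isBalanced_conj {f : E → ℤ} : G.IsFlow f ↔ G.IsBalanced (G.conj f) := by
  have key : ∀ u, ∑ x : E, G.mult u x * G.conj f x =
      (∑ x : E, if G.seg x then G.mult u x * f x else 0) -
        ∑ x : E, if G.seg x then 0 else G.mult u x * f x := by
    intro u
    rw [← Finset.sum_sub_distrib]
    refine Finset.sum_congr rfl fun x _ => ?_
    unfold conj
    split_ifs <;> ring
  simp only [IsFlow, IsBalanced, key, sub_eq_zero]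

lemma IsFlow.sub {f h : E → ℤ} (hf : G.IsFlow f) (hh : G.IsFlow h) : G.IsFlow (f - h) := by
  rw [isFlow_iff_isBalanced_conj, conj_sub]
  exact (isFlow_iff_isBalanced_conj.1 hf).sub (isFlow_iff_isBalanced_conj.1 hh)

lemma MinimalFlow.eq_of_abs_add_abs_sub {f h : E → ℤ} (hmin : G.MinimalFlow f)
    (hf : G.IsFlow f) (hh : G.IsFlow h) (hne : h ≠ 0)
    (habs : ∀ x, |h x| + |f x - h x| = |f x|) : h = f := by
  by_contra hhf
  refine hmin ⟨h, f - h, hh, hf.sub hh, hne, sub_ne_zero.2 (Ne.symm hhf), by simp, ?_⟩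
  simp only [l1, Pi.sub_apply, ← Finset.sum_add_distrib, habs]

lemma IsBalanced.exists_pos {g : E → ℤ} (hg : G.IsBalanced g) (hne : g ≠ 0) :
    ∃ x, 0 < g x := by
  obtain ⟨x₀, hx₀⟩ := Function.ne_iff.1 hne
  let p := (G.ends x₀).out.1
  have hp : 0 < G.mult p x₀ := mult_pos_iff.2 (Sym2.out_fst_mem _)
  obtain ⟨x, -, hx⟩ := Finset.exists_pos_of_sum_zero_of_exists_nonzero _ (hg p)
    ⟨x₀, Finset.mem_univ _, mul_ne_zero hp.ne' hx₀⟩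
  exact ⟨x, pos_of_mul_pos_right hx (mult_nonneg p x)⟩

end Balanced

structure ConformalWalk (G : SeqGraph V E) (g : E → ℤ) where
  len : ℕ
  e : ℕ → E
  v : ℕ → V
  ends_e : ∀ i < len, G.ends (e i) = s(v i, v (i + 1))
  sign_pos : ∀ i < len, 0 < (-1) ^ i * g (e i)
  count_le : ∀ x, ∑ i ∈ range len, (if e i = x then 1 else 0 : ℤ) ≤ |g x|

namespace ConformalWalk

variable {g : E → ℤ} (W : G.ConformalWalk g)

def count (x : E) : ℤ := ∑ i ∈ range W.len, if W.e i = x then 1 else 0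

def weight (x : E) : ℤ := ∑ i ∈ range W.len, if W.e i = x then (-1) ^ i else 0

lemma count_nonneg (x : E) : 0 ≤ W.count x :=
  Finset.sum_nonneg fun _ _ => by split_ifs <;> norm_num

lemma one_le_count {i : ℕ} (hi : i < W.len) : 1 ≤ W.count (W.e i) := by
  have := Finset.single_le_sum (f := fun j => if W.e j = W.e i then (1 : ℤ) else 0)
    (fun _ _ => by split_ifs <;> norm_num) (Finset.mem_range.2 hi)
  rwa [if_pos rfl] at this

lemma weight_eq_sign_mul_count (x : E) : W.weight x = (g x).sign * W.count x := by
  rw [count, Finset.mul_sum]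
  refine Finset.sum_congr rfl fun i hi => ?_
  split_ifs with h
  · rw [mul_one, ← h]
    exact Int.neg_one_pow_eq_sign_of_mul_pos (W.sign_pos i (Finset.mem_range.1 hi))
  · rw [mul_zero]

lemma abs_weight (x : E) : |W.weight x| = W.count x := by
  rw [weight_eq_sign_mul_count]
  exact Int.abs_sign_mul_of_le (W.count_nonneg x) (W.count_le x)

lemma sub_weight (x : E) : g x - W.weight x = (g x).sign * (|g x| - W.count x) := by
  rw [weight_eq_sign_mul_count, mul_sub, Int.sign_mul_abs]

lemma abs_sub_weight (x : E) : |g x - W.weight x| = |g x| - W.count x := by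
  rw [sub_weight]
  exact Int.abs_sign_mul_of_le (sub_nonneg.2 (W.count_le x)) (by linarith [W.count_nonneg x])

lemma pos_and_count_lt_of_pos_sub_weight {c : ℤ} {x : E} (h : 0 < c * (g x - W.weight x)) :
    0 < c * g x ∧ W.count x < |g x| := by
  rw [sub_weight, ← mul_assoc] at h
  have hsign : 0 < c * (g x).sign := pos_of_mul_pos_left h (sub_nonneg.2 (W.count_le x))
  have hcount : W.count x < |g x| := sub_pos.1 (pos_of_mul_pos_right h hsign.le)
  refine ⟨?_, hcount⟩
  rw [← Int.sign_mul_abs (g x), ← mul_assoc]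
  exact mul_pos hsign (by linarith [W.count_nonneg x])

def snoc (x : E) (hx : W.v W.len ∈ G.ends x) (hpos : 0 < (-1) ^ W.len * (g x - W.weight x)) :
    G.ConformalWalk g where
  len := W.len + 1
  e i := if i = W.len then x else W.e i
  v i := if i = W.len + 1 then Sym2.Mem.other hx else W.v i
  ends_e i hi := by
    rcases Nat.lt_succ_iff_lt_or_eq.1 hi with hi | rfl
    · simpa [hi.ne, (hi.trans (Nat.lt_succ_self _)).ne] using W.ends_e i hi
    · simp
  sign_pos i hi := by
    rcases Nat.lt_succ_iff_lt_or_eq.1 hi with hi | rfl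
    · simpa [hi.ne] using W.sign_pos i hi
    · simpa using (W.pos_and_count_lt_of_pos_sub_weight hpos).1
  count_le y := by
    have hcount := (W.pos_and_count_lt_of_pos_sub_weight hpos).2
    rw [Finset.sum_range_succ, if_pos rfl]
    rw [Finset.sum_congr rfl fun i hi => by rw [if_neg (Finset.mem_range.1 hi).ne]]
    split_ifs with hxy
    · subst hxy; exact hcount
    · simpa using W.count_le y

lemma weight_ne_zero (hW : 0 < W.len) : W.weight ≠ 0 := fun h => by
  have := W.one_le_count hW
  rw [← abs_weight, h] at this
  simp at this

lemma v_val_add_one (hclosed : W.v W.len = W.v 0) [NeZero W.len] (i : ZMod W.len) :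
    W.v (i.val + 1) = W.v (i + 1).val := by
  rw [ZMod.val_add_one_eq_mod]
  rcases Nat.lt_or_eq_of_le (ZMod.val_lt i) with h | h
  · rw [Nat.mod_eq_of_lt h]
  · rw [show i.val + 1 = W.len from h, Nat.mod_self, hclosed]

def toCycleTraversal (hW : W.len ≠ 0) (hclosed : W.v W.len = W.v 0) : G.CycleTraversal where
  L := W.len
  pos := hW
  e i := W.e i.val
  v i := W.v (i.val + 1)
  compat i := by
    have : NeZero W.len := ⟨hW⟩
    rw [W.v_val_add_one hclosed, sub_add_cancel]
    exact W.ends_e _ (ZMod.val_lt i)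

section Closed

variable (hW : W.len ≠ 0) (hclosed : W.v W.len = W.v 0)

lemma tight_toCycleTraversal : (W.toCycleTraversal hW hclosed).Tight := fun i j hij => by
  have : NeZero (W.toCycleTraversal hW hclosed).L := ⟨hW⟩
  refine Int.mod_two_eq_of_neg_one_pow_eq ?_
  rw [Int.neg_one_pow_eq_sign_of_mul_pos (W.sign_pos _ (ZMod.val_lt i)),
    Int.neg_one_pow_eq_sign_of_mul_pos (W.sign_pos _ (ZMod.val_lt j))]
  exact congrArg (fun x => (g x).sign) hij

lemma altWeight_toCycleTraversal [Fintype E] :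
    (W.toCycleTraversal hW hclosed).altWeight = W.weight := by
  have : NeZero (W.toCycleTraversal hW hclosed).L := ⟨hW⟩
  funext x
  exact ZMod.sum_comp_val fun i => if W.e i = x then (-1) ^ i else 0

end Closed

variable [Fintype E]

lemma sum_count : ∑ x, W.count x = W.len := by
  simp only [count]
  rw [Finset.sum_comm]
  simp

lemma len_le_l1 : (W.len : ℤ) ≤ l1 g := by
  rw [← sum_count]
  exact Finset.sum_le_sum fun x _ => W.count_le x

lemma len_eq_l1_weight : (W.len : ℤ) = l1 W.weight := by
  simp only [l1, abs_weight, sum_count]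

lemma sum_mult_weight (u : V) :
    ∑ x, G.mult u x * W.weight x =
      (if u = W.v 0 then 1 else 0) - (-1) ^ W.len * (if u = W.v W.len then 1 else 0) := by
  set F : ℕ → ℤ := fun i => (-1) ^ i * if u = W.v i then 1 else 0
  calc ∑ x, G.mult u x * W.weight x
      = ∑ i ∈ range W.len, (-1) ^ i * G.mult u (W.e i) := by
        simp only [weight, Finset.mul_sum, mul_ite, mul_zero]
        rw [Finset.sum_comm]
        simp [mul_comm]
    _ = ∑ i ∈ range W.len, (F i - F (i + 1)) := by
        refine Finset.sum_congr rfl fun i hi => ?_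
        rw [mult_of_ends_eq (W.ends_e i (Finset.mem_range.1 hi))]
        simp only [F, pow_succ]
        ring
    _ = F 0 - F W.len := Finset.sum_range_sub' F W.len
    _ = _ := by simp [F]

lemma isBalanced_weight (hclosed : W.v W.len = W.v 0) (heven : Even W.len) :
    G.IsBalanced W.weight := fun u => by
  simp [sum_mult_weight, hclosed, heven.neg_one_pow]

/-- Unless the walk is closed of even length, the residual `g - W.weight`, weighted by the sign
`(-1) ^ W.len` of the next step, has positive incidence sum at the end vertex. -/
lemma exists_pos_sub_weight (hg : G.IsBalanced g) (hW : ¬ (W.v W.len = W.v 0 ∧ Even W.len)) :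
    ∃ x, W.v W.len ∈ G.ends x ∧ 0 < (-1) ^ W.len * (g x - W.weight x) := by
  have hsum : ∑ x, G.mult (W.v W.len) x * ((-1) ^ W.len * (g x - W.weight x)) =
      1 - (-1) ^ W.len * (if W.v W.len = W.v 0 then 1 else 0) := by
    have hsq : ((-1 : ℤ) ^ W.len) * (-1) ^ W.len = 1 := by rw [← mul_pow]; simp
    simp only [mul_left_comm _ ((-1 : ℤ) ^ W.len), mul_sub, ← Finset.mul_sum,
      Finset.sum_sub_distrib, hg (W.v W.len), W.sum_mult_weight (W.v W.len), if_true]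
    linear_combination hsq
  have hpos : 0 < 1 - (-1) ^ W.len * (if W.v W.len = W.v 0 then 1 else 0 : ℤ) := by
    by_cases hclosed : W.v W.len = W.v 0
    · have hodd : Odd W.len := Nat.not_even_iff_odd.1 fun h => hW ⟨hclosed, h⟩
      simp [hclosed, hodd.neg_one_pow]
    · simp [hclosed]
  rw [← hsum] at hpos
  obtain ⟨x, -, hx⟩ := Finset.exists_lt_of_sum_lt (Finset.sum_const_zero.trans_lt hpos)
  rcases pos_and_pos_or_neg_and_neg_of_mul_pos hx with ⟨hmult, hres⟩ | ⟨hmult, -⟩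
  · exact ⟨x, mult_pos_iff.1 hmult, hres⟩
  · exact absurd hmult (mult_nonneg _ _).not_gt

theorem exists_closed_of_len_pos (hg : G.IsBalanced g) (W : G.ConformalWalk g) (hW : 0 < W.len) :
    ∃ W' : G.ConformalWalk g, 0 < W'.len ∧ W'.v W'.len = W'.v 0 ∧ Even W'.len := by
  by_cases hc : W.v W.len = W.v 0 ∧ Even W.len
  · exact ⟨W, hW, hc⟩
  · obtain ⟨x, hx, hpos⟩ := W.exists_pos_sub_weight hg hc
    have hlen := (W.snoc x hx hpos).len_le_l1
    exact exists_closed_of_len_pos hg (W.snoc x hx hpos) (Nat.succ_pos _)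
termination_by (l1 g).toNat - W.len
decreasing_by
  simp only [snoc] at hlen ⊢
  omega

theorem exists_closed (hg : G.IsBalanced g) {x : E} (hx : 0 < g x) :
    ∃ W : G.ConformalWalk g, 0 < W.len ∧ W.v W.len = W.v 0 ∧ Even W.len := by
  let nil : G.ConformalWalk g :=
    { len := 0, e := fun _ => x, v := fun _ => (G.ends x).out.1
      ends_e := by simp, sign_pos := by simp, count_le := by simp }
  exact exists_closed_of_len_pos hg (nil.snoc x (Sym2.out_fst_mem _) (by simpa [nil, weight]))
    (Nat.succ_pos _)

lemma weight_eq_conj_of_minimalFlow {f : E → ℤ} (hmin : G.MinimalFlow f) (hf : G.IsFlow f)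
    (W : G.ConformalWalk (G.conj f)) (hW : 0 < W.len) (hclosed : W.v W.len = W.v 0)
    (heven : Even W.len) : W.weight = G.conj f := by
  have hres (x : E) : f x - G.conj W.weight x = G.conj (G.conj f - W.weight) x := by
    rw [conj_sub, conj_conj, Pi.sub_apply]
  have := hmin.eq_of_abs_add_abs_sub (h := G.conj W.weight) hf
    (isFlow_iff_isBalanced_conj.2 (by simpa using W.isBalanced_weight hclosed heven))
    (by simpa using W.weight_ne_zero hW) fun x => by
      rw [hres x, abs_conj, abs_conj, Pi.sub_apply, abs_weight, abs_sub_weight,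
        ← abs_conj (G := G) f]
      ring
  simpa using congrArg G.conj this

end ConformalWalk

end SeqGraph

theorem stmt_13_general (V E : Type) [Fintype E] (G : SeqGraph V E)
    (f : E → ℤ) (hf : G.IsFlow f) (hne : f ≠ 0) (hmin : G.MinimalFlow f) :
    ∃ t : G.CycleTraversal,
      Even t.L ∧ (t.L : ℤ) = SeqGraph.l1 f ∧ t.Tight ∧ t.altFlow = f := by
  have hbal := SeqGraph.isFlow_iff_isBalanced_conj.1 hf
  obtain ⟨x, hx⟩ := hbal.exists_pos (by simpa using hne)
  obtain ⟨W, hW, hclosed, heven⟩ := SeqGraph.ConformalWalk.exists_closed hbal hx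
  have hweight := W.weight_eq_conj_of_minimalFlow hmin hf hW hclosed heven
  refine ⟨W.toCycleTraversal hW.ne' hclosed, heven, ?_, W.tight_toCycleTraversal _ _, ?_⟩
  · exact W.len_eq_l1_weight.trans (by rw [hweight, SeqGraph.l1_conj])
  · rw [SeqGraph.CycleTraversal.altFlow, W.altWeight_toCycleTraversal, hweight,
      SeqGraph.conj_conj]

/-- A nonzero minimal integer flow is the alternating flow of a tight
even-length cycle traversal whose length is `‖f‖₁`. -/
theorem stmt_13 (V E : Type) [Fintype V] [Fintype E] (G : SeqGraph V E)
    (f : E → ℤ) (hf : G.IsFlow f) (hne : f ≠ 0) (hmin : G.MinimalFlow f) :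
    ∃ t : G.CycleTraversal,
      Even t.L ∧ (t.L : ℤ) = SeqGraph.l1 f ∧ t.Tight ∧ t.altFlow = f :=
  stmt_13_general V E G f hf hne hmin
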